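/- Let W: X → Y be a discrete memoryless channel on finite alphabets and s > 0, and let R̂(s) be the right derivative at t = s of the function t ↦ t·I_{1+t}(W). Then: (i) if r ≥ R̂(s), then sup_{t≥0} t(r − I_{1+t}(W)) = sup_{t≥s} t(r − I_{1+t}(W)); (ii) if 0 ≤ r < R̂(s), then sup_{t≥s} t(r − I_{1+t}(W)) = s(r − I_{1+s}(W)); (iii) sup_{t≥0} t(R̂(s) − I_{1+t}(W)) = s(R̂(s) − I_{1+s}(W)). -/

import Mathlib

open scoped ENNReal NNReal BigOperators Classical
open Filter

noncomputable section

namespace RST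

/-- Base-2 logarithm `ℝ≥0∞ → EReal`, with `log 0 = ⊥` and `log ⊤ = ⊤`. -/
def elog2 (s : ℝ≥0∞) : EReal :=
  if s = 0 then ⊥ else if s = ⊤ then ⊤ else ((Real.logb 2 s.toReal : ℝ) : EReal)

/-- Base-2 logarithm `EReal → EReal` (for nonnegative arguments). -/
def eLog2 (x : EReal) : EReal :=
  if x = ⊤ then ⊤ else if x ≤ 0 then ⊥ else ((Real.logb 2 x.toReal : ℝ) : EReal)

/-- Base-2 exponential `EReal → ℝ≥0∞`. -/
def epow2 (x : EReal) : ℝ≥0∞ :=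
  if x = ⊤ then ⊤ else if x = ⊥ then 0 else ENNReal.ofReal ((2 : ℝ) ^ x.toReal)

variable {X Y : Type*}

/-- A probability distribution on a finite alphabet, as an `ℝ≥0∞`-valued function. -/
def IsDist [Fintype X] (P : X → ℝ≥0∞) : Prop := ∑ x, P x = 1

/-- A discrete memoryless channel: every row is a probability distribution. -/
def IsChannel [Fintype X] [Fintype Y] (W : X → Y → ℝ≥0∞) : Prop := ∀ x, ∑ y, W x y = 1

/-- Order-`α` Rényi divergence (base 2), with the order `α ∈ [0,∞]` encoded as `ℝ≥0∞`.
The conventions `0/0 = 0` and `a/0 = ∞` (for `a > 0`, `α > 1`) are built into `ℝ≥0∞`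
arithmetic.  The second argument is allowed to be an arbitrary nonnegative vector. -/
def renyiD [Fintype X] (α : ℝ≥0∞) (P Q : X → ℝ≥0∞) : EReal :=
  if α = 0 then - elog2 (∑ x ∈ Finset.univ.filter fun x => P x ≠ 0, Q x)
  else if α = 1 then ∑ x, ((P x).toReal : EReal) * elog2 (P x / Q x)
  else if α = ⊤ then elog2 (⨆ x, P x / Q x)
  else (((α.toReal - 1)⁻¹ : ℝ) : EReal) *
    elog2 (∑ x, P x ^ α.toReal * Q x ^ (1 - α.toReal))

/-- The `X`-marginal of a joint distribution on `X × Y`. -/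
def margX [Fintype X] [Fintype Y] (P : X × Y → ℝ≥0∞) : X → ℝ≥0∞ := fun x => ∑ y, P (x, y)

/-- Order-`α` Rényi mutual information `I_α(X:Y)_P = min_{Q_Y} D_α(P‖P_X × Q_Y)`. -/
def renyiMI [Fintype X] [Fintype Y] (α : ℝ≥0∞) (P : X × Y → ℝ≥0∞) : EReal :=
  ⨅ Q : {Q : Y → ℝ≥0∞ // IsDist Q}, renyiD α P fun p => margX P p.1 * Q.1 p.2

/-- The joint input-output distribution `P_X · W`. -/
def joint [Fintype X] [Fintype Y] (PX : X → ℝ≥0∞) (W : X → Y → ℝ≥0∞) : X × Y → ℝ≥0∞ :=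
  fun p => PX p.1 * W p.1 p.2

/-- Order-`α` Rényi capacity `I_α(W) = max_{P_X} I_α(X:Y)_{P_X · W}`. -/
def renyiCap [Fintype X] [Fintype Y] (α : ℝ≥0∞) (W : X → Y → ℝ≥0∞) : EReal :=
  ⨆ P : {P : X → ℝ≥0∞ // IsDist P}, renyiMI α (joint P.1 W)

/-- `N` is a simulation of a channel `X → Y` with communication cost at most `c` bits:
shared randomness `K = Fin m` with distribution `PK`, a message set `{1,…,M}` with
`log₂ M ≤ c`, an encoder `E` and a decoder `D`. -/
def IsSimulation [Fintype X] [Fintype Y] (c : ℝ) (N : X → Y → ℝ≥0∞) : Prop :=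
  ∃ (m M : ℕ) (PK : Fin m → ℝ≥0∞) (E : X → Fin m → Fin M → ℝ≥0∞)
    (D : Fin M → Fin m → Y → ℝ≥0∞),
    0 < M ∧ Real.logb 2 M ≤ c ∧ (∑ k, PK k = 1) ∧
    (∀ x k, ∑ j, E x k j = 1) ∧ (∀ j k, ∑ y, D j k y = 1) ∧
    ∀ x y, N x y = ∑ k, ∑ j, PK k * E x k j * D j k y

/-- `D_α(W, N) := max_x D_α(W(·|x) ‖ N(·|x))`. -/
def chD [Fintype X] [Fintype Y] (α : ℝ≥0∞) (W N : X → Y → ℝ≥0∞) : EReal :=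
  ⨆ x, renyiD α (W x) (N x)

/-- `𝖣_α(W, c) := min_{N ∈ A(W,c)} D_α(W, N)`. -/
def simD [Fintype X] [Fintype Y] (α : ℝ≥0∞) (W : X → Y → ℝ≥0∞) (c : ℝ) : EReal :=
  ⨅ N : {N : X → Y → ℝ≥0∞ // IsSimulation c N}, chD α W N.1

/-- The `n`-fold memoryless extension `W^{×n}` of a channel `W`. -/
def prodCh [Fintype X] [Fintype Y] (n : ℕ) (W : X → Y → ℝ≥0∞) :
    (Fin n → X) → (Fin n → Y) → ℝ≥0∞ :=
  fun xs ys => ∏ i, W (xs i) (ys i)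

/-- A sequence of communication costs with rate at most `r`. -/
def RateOK (r : ℝ) (c : ℕ → ℝ) : Prop :=
  (∀ n, 0 ≤ c n) ∧ Filter.limsup (fun n : ℕ => ((c n / n : ℝ) : EReal)) Filter.atTop ≤ (r : EReal)

/-- Reliability function `E_rf^{(α)}(W, r)`. -/
def Erf [Fintype X] [Fintype Y] (α : ℝ≥0∞) (W : X → Y → ℝ≥0∞) (r : ℝ) : EReal :=
  ⨆ c : {c : ℕ → ℝ // RateOK r c},
    Filter.liminf
      (fun n : ℕ => (((-1 : ℝ) / n : ℝ) : EReal) * eLog2 (simD α (prodCh n W) (c.1 n)))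
      Filter.atTop

/-- Strong converse exponent `E_sc^{(α)}(W, r)`. -/
def Esc [Fintype X] [Fintype Y] (α : ℝ≥0∞) (W : X → Y → ℝ≥0∞) (r : ℝ) : EReal :=
  ⨅ c : {c : ℕ → ℝ // RateOK r c},
    Filter.limsup
      (fun n : ℕ => (((1 : ℝ) / n : ℝ) : EReal) * simD α (prodCh n W) (c.1 n))
      Filter.atTop

/-- The `α`-Rényi simulation rate `R_RST^{(α)}(W)`. -/
def Rrst [Fintype X] [Fintype Y] (α : ℝ≥0∞) (W : X → Y → ℝ≥0∞) : EReal :=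
  ⨅ c : {c : ℕ → ℝ // (∀ n, 0 ≤ c n) ∧
      Filter.limsup (fun n : ℕ => simD α (prodCh n W) (c n)) Filter.atTop = 0},
    Filter.limsup (fun n : ℕ => ((c.1 n / n : ℝ) : EReal)) Filter.atTop

/-- n-fold product of a joint distribution on `X × Y`, as a distribution on pairs of
sequences. -/
def prodJoint [Fintype X] [Fintype Y] (n : ℕ) (P : X × Y → ℝ≥0∞) :
    (Fin n → X) × (Fin n → Y) → ℝ≥0∞ :=
  fun p => ∏ i, P (p.1 i, p.2 i)

/-- n-fold product distribution. -/
def prodDist [Fintype X] (n : ℕ) (P : X → ℝ≥0∞) : (Fin n → X) → ℝ≥0∞ :=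
  fun xs => ∏ i, P (xs i)

/-- The type (empirical count vector) of a sequence. -/
def seqType [Fintype Y] [DecidableEq Y] {n : ℕ} (ys : Fin n → Y) : Y → ℕ :=
  fun y => (Finset.univ.filter fun i => ys i = y).card

/-- The cardinality of the type class of a sequence. -/
def typeClassCard [Fintype Y] [DecidableEq Y] {n : ℕ} (ys : Fin n → Y) : ℕ :=
  (Finset.univ.filter fun zs : Fin n → Y => seqType zs = seqType ys).card

/-- The number of types of sequences in `Y^n`. -/
def numTypes (Y : Type*) [Fintype Y] [DecidableEq Y] (n : ℕ) : ℕ :=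
  (Finset.univ.image fun ys : Fin n → Y => seqType ys).card

/-- `Φ_{Y^n}`: the uniform mixture over type classes of `Y^n`. -/
def PhiY (Y : Type*) [Fintype Y] [DecidableEq Y] (n : ℕ) : (Fin n → Y) → ℝ≥0∞ :=
  fun ys => ((numTypes Y n : ℝ≥0∞) * (typeClassCard ys : ℝ≥0∞))⁻¹

end RST

/-!
For `t > 0`, Sibson's identity evaluates the minimum over `Q_Y` in `I_{1+t}(X:Y)` for
`P_{XY} = P · W`: it is attained at `Q_Y(y) ∝ A_t(y)^{1/(1+t)}` with
`A_t(y) = ∑ₓ P(x) W(y|x)^{1+t}`, so that `t · I_{1+t}(X:Y) = (1+t) log₂ ∑_y A_t(y)^{1/(1+t)}`.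
Hölder's inequality, applied once in `x` (log-convexity of `t ↦ A_t(y)`) and once in `y`, shows
that this is convex in `t ≥ 0`; hence so is its supremum over `P`, `F(t) = t · I_{1+t}(W)`.
For convex `F` with right derivative `R̂` at `s`, the supporting line `F(t) ≥ F(s) + R̂ (t - s)`
gives `t r - F(t) ≤ s r - F(s)` whenever `(r - R̂)(t - s) ≤ 0`, and the three claims follow.
-/

open Set Topology

section SupportingLine

variable {S : Set ℝ} {f : ℝ → ℝ} {s u R : ℝ}

theorem ConvexOn.add_mul_sub_le_of_hasDerivWithinAt_Ioi (hf : ConvexOn ℝ S f)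
    (hs : s ∈ interior S) (hu : u ∈ S) (hR : HasDerivWithinAt f R (Ioi s) s) :
    f s + R * (u - s) ≤ f u := by
  rcases lt_trichotomy u s with hus | rfl | hsu
  · have hslope : Tendsto (slope f s) (𝓝[>] s) (𝓝 R) :=
      (hasDerivWithinAt_iff_tendsto_slope' self_notMem_Ioi).1 hR
    have hright : ∀ᶠ v in 𝓝[>] s, v ∈ S :=
      nhdsWithin_le_nhds (mem_interior_iff_mem_nhds.1 hs)
    have hle : (f s - f u) / (s - u) ≤ R := by
      refine ge_of_tendsto hslope ?_
      filter_upwards [hright, self_mem_nhdsWithin] with v hvS (hsv : s < v)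
      rw [slope_def_field]
      exact hf.slope_mono_adjacent hu hvS hus hsv
    rw [div_le_iff₀ (sub_pos.2 hus)] at hle
    linarith
  · simp
  · have hle := hf.le_slope_of_hasDerivWithinAt_Ioi (interior_subset hs) hu hsu hR
    rw [slope_def_field, le_div_iff₀ (sub_pos.2 hsu)] at hle
    linarith

theorem ConvexOn.mul_sub_le_of_hasDerivWithinAt_Ioi (hf : ConvexOn ℝ S f)
    (hs : s ∈ interior S) (hu : u ∈ S) (hR : HasDerivWithinAt f R (Ioi s) s) {r : ℝ}
    (hr : (r - R) * (u - s) ≤ 0) :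
    u * r - f u ≤ s * r - f s := by
  nlinarith [hf.add_mul_sub_le_of_hasDerivWithinAt_Ioi hs hu hR]

end SupportingLine

theorem ConvexOn.ciSup {ι E : Type*} [Nonempty ι] [AddCommMonoid E] [Module ℝ E] {S : Set E}
    {f : ι → E → ℝ} (hS : Convex ℝ S) (hf : ∀ i, ConvexOn ℝ S (f i))
    (hbdd : ∀ x ∈ S, BddAbove (range fun i => f i x)) :
    ConvexOn ℝ S fun x => ⨆ i, f i x := by
  refine ⟨hS, fun x hx y hy a b ha hb hab => ciSup_le fun i => ?_⟩
  exact ((hf i).2 hx hy ha hb hab).trans (add_le_add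
    (smul_le_smul_of_nonneg_left (le_ciSup (hbdd x hx) i) ha)
    (smul_le_smul_of_nonneg_left (le_ciSup (hbdd y hy) i) hb))

theorem ENNReal.sum_rpow_mul_rpow_le {ι : Type*} (s : Finset ι) (f g : ι → ℝ≥0∞) {a b : ℝ}
    (ha : 0 < a) (hb : 0 < b) (hab : a + b = 1) :
    ∑ i ∈ s, f i ^ a * g i ^ b ≤ (∑ i ∈ s, f i) ^ a * (∑ i ∈ s, g i) ^ b := by
  have hpq : a⁻¹.HolderConjugate b⁻¹ := by
    rw [Real.holderConjugate_iff]
    refine ⟨?_, by rw [inv_inv, inv_inv, hab]⟩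
    rw [one_lt_inv₀ ha]; linarith
  have := ENNReal.inner_le_Lp_mul_Lq s (fun i => f i ^ a) (fun i => g i ^ b) hpq
  simpa [← ENNReal.rpow_mul, ha.ne', hb.ne'] using this

theorem ENNReal.sum_mul_rpow_add_le {ι : Type*} (s : Finset ι) (c w : ι → ℝ≥0∞)
    {u v θ θ' : ℝ} (hu : 0 ≤ u) (hv : 0 ≤ v) (hθ : 0 < θ) (hθ' : 0 < θ') (hθθ' : θ + θ' = 1) :
    ∑ i ∈ s, c i * w i ^ (θ * u + θ' * v) ≤
      (∑ i ∈ s, c i * w i ^ u) ^ θ * (∑ i ∈ s, c i * w i ^ v) ^ θ' := by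
  have hsplit : ∀ i, c i * w i ^ (θ * u + θ' * v) =
      (c i * w i ^ u) ^ θ * (c i * w i ^ v) ^ θ' := by
    intro i
    rw [ENNReal.mul_rpow_of_nonneg _ _ hθ.le, ENNReal.mul_rpow_of_nonneg _ _ hθ'.le,
      ← ENNReal.rpow_mul, ← ENNReal.rpow_mul,
      ENNReal.rpow_add_of_nonneg _ _ (by positivity) (by positivity)]
    nth_rewrite 1 [← ENNReal.rpow_one (c i), ← hθθ', ENNReal.rpow_add_of_nonneg _ _ hθ.le hθ'.le]
    ring_nf
  simp_rw [hsplit]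
  exact ENNReal.sum_rpow_mul_rpow_le s _ _ hθ hθ' hθθ'

section PowerMeans

variable {ι : Type*} [Fintype ι] {A Q : ι → ℝ≥0∞} {t : ℝ}

theorem ENNReal.rpow_sum_rpow_inv_le_sum_mul_rpow_neg (hQ : ∑ i, Q i = 1) (ht : 0 < t) :
    (∑ i, A i ^ (1 + t)⁻¹) ^ (1 + t) ≤ ∑ i, A i * Q i ^ (-t) := by
  by_cases hsupp : ∃ i, Q i = 0 ∧ A i ≠ 0
  · obtain ⟨i, hQi, hAi⟩ := hsupp
    have hi : A i * Q i ^ (-t) = ⊤ := by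
      rw [hQi, ENNReal.zero_rpow_of_neg (by linarith), ENNReal.mul_top hAi]
    exact le_top.trans_eq (ENNReal.sum_eq_top.2 ⟨i, Finset.mem_univ i, hi⟩).symm
  push Not at hsupp
  have hQ_ne_top : ∀ i, Q i ≠ ⊤ := fun i =>
    (ENNReal.lt_top_of_sum_ne_top (hQ ▸ ENNReal.one_ne_top) (Finset.mem_univ i)).ne
  have hsplit : ∀ i,
      A i ^ (1 + t)⁻¹ = (A i * Q i ^ (-t)) ^ (1 + t)⁻¹ * Q i ^ (t / (1 + t)) := by
    intro i
    by_cases hQi : Q i = 0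
    · rw [hsupp i hQi, hQi, ENNReal.zero_rpow_of_pos (by positivity), zero_mul,
        ENNReal.zero_rpow_of_pos (by positivity), zero_mul]
    rw [ENNReal.mul_rpow_of_nonneg _ _ (by positivity), ← ENNReal.rpow_mul, mul_assoc,
      ← ENNReal.rpow_add _ _ hQi (hQ_ne_top i),
      show -t * (1 + t)⁻¹ + t / (1 + t) = 0 by ring, ENNReal.rpow_zero, mul_one]
  calc (∑ i, A i ^ (1 + t)⁻¹) ^ (1 + t)
      = (∑ i, (A i * Q i ^ (-t)) ^ (1 + t)⁻¹ * Q i ^ (t / (1 + t))) ^ (1 + t) := by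
        simp_rw [← hsplit]
    _ ≤ ((∑ i, A i * Q i ^ (-t)) ^ (1 + t)⁻¹ * (∑ i, Q i) ^ (t / (1 + t))) ^ (1 + t) := by
        gcongr
        exact ENNReal.sum_rpow_mul_rpow_le _ _ _ (by positivity) (by positivity)
          (by field_simp)
    _ = ∑ i, A i * Q i ^ (-t) := by
        rw [hQ, ENNReal.one_rpow, mul_one, ← ENNReal.rpow_mul, inv_mul_cancel₀ (by positivity),
          ENNReal.rpow_one]

theorem ENNReal.sum_mul_rpow_neg_of_proportional (hA : ∀ i, A i ≠ ⊤) (ht : 0 < t)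
    (h0 : ∑ i, A i ^ (1 + t)⁻¹ ≠ 0) (htop : ∑ i, A i ^ (1 + t)⁻¹ ≠ ⊤) :
    ∑ i, A i * (A i ^ (1 + t)⁻¹ / ∑ j, A j ^ (1 + t)⁻¹) ^ (-t) =
      (∑ i, A i ^ (1 + t)⁻¹) ^ (1 + t) := by
  set N := ∑ j, A j ^ (1 + t)⁻¹
  have hterm : ∀ i, A i * (A i ^ (1 + t)⁻¹ / N) ^ (-t) = A i ^ (1 + t)⁻¹ * N ^ t := by
    intro i
    by_cases hAi : A i = 0
    · simp [hAi, ENNReal.zero_rpow_of_pos (show 0 < (1 + t)⁻¹ by positivity)]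
    have hAi' : A i ^ (1 + t)⁻¹ ≠ ⊤ := ENNReal.rpow_ne_top_of_nonneg (by positivity) (hA i)
    rw [div_eq_mul_inv, ENNReal.mul_rpow_of_ne_top hAi' (ENNReal.inv_ne_top.2 h0),
      ENNReal.inv_rpow, ← ENNReal.rpow_neg, neg_neg, ← mul_assoc, ← ENNReal.rpow_mul]
    congr 1
    nth_rewrite 1 [← ENNReal.rpow_one (A i)]
    rw [← ENNReal.rpow_add _ _ hAi (hA i)]
    congr 1
    field_simp
    ring
  rw [Finset.sum_congr rfl fun i _ => hterm i, ← Finset.sum_mul,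
    ENNReal.rpow_add _ _ h0 htop, ENNReal.rpow_one]

end PowerMeans

namespace RST

section

variable {X Y : Type*} [Fintype X] {W : X → Y → ℝ≥0∞} {P : X → ℝ≥0∞} {t : ℝ}

theorem IsDist.le_one (hP : IsDist P) (x : X) : P x ≤ 1 :=
  hP ▸ Finset.single_le_sum (fun _ _ => zero_le) (Finset.mem_univ x)

theorem IsDist.ne_top (hP : IsDist P) (x : X) : P x ≠ ⊤ :=
  ne_top_of_le_ne_top ENNReal.one_ne_top (hP.le_one x)

theorem IsDist.exists_ne_zero (hP : IsDist P) : ∃ x, P x ≠ 0 := by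
  by_contra! h
  simp [IsDist, h] at hP

theorem isDist_uniform [Nonempty X] : IsDist fun _ : X => (Fintype.card X : ℝ≥0∞)⁻¹ := by
  rw [IsDist, Finset.sum_const, Finset.card_univ, nsmul_eq_mul,
    ENNReal.mul_inv_cancel (by simp) (ENNReal.natCast_ne_top _)]

theorem elog2_of_ne {x : ℝ≥0∞} (h0 : x ≠ 0) (htop : x ≠ ⊤) :
    elog2 x = ((Real.logb 2 x.toReal : ℝ) : EReal) := by
  rw [elog2, if_neg h0, if_neg htop]

theorem elog2_mono : Monotone elog2 := by
  intro x y hxy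
  by_cases hx0 : x = 0
  · simp [elog2, hx0]
  by_cases hy : y = ⊤
  · simp [elog2, hy]
  have hxtop : x ≠ ⊤ := ne_top_of_le_ne_top hy hxy
  have hy0 : y ≠ 0 := (pos_of_ne_zero hx0 |>.trans_le hxy).ne'
  rw [elog2_of_ne hx0 hxtop, elog2_of_ne hy0 hy, EReal.coe_le_coe_iff]
  exact Real.logb_le_logb_of_le one_lt_two (ENNReal.toReal_pos hx0 hxtop)
    (ENNReal.toReal_mono hy hxy)

theorem renyiD_ofReal_one_add (P Q : X → ℝ≥0∞) (ht : 0 < t) :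
    renyiD (ENNReal.ofReal (1 + t)) P Q =
      ((t⁻¹ : ℝ) : EReal) * elog2 (∑ x, P x ^ (1 + t) * Q x ^ (-t)) := by
  have h1 : ENNReal.ofReal (1 + t) ≠ 1 := by
    rw [Ne, ENNReal.ofReal_eq_one]; linarith
  rw [renyiD, if_neg (by simp; linarith), if_neg h1, if_neg ENNReal.ofReal_ne_top,
    ENNReal.toReal_ofReal (by linarith)]
  ring_nf

variable (W P t) in
def tiltedOutput (y : Y) : ℝ≥0∞ := ∑ x, P x * W x y ^ (1 + t)

variable {t₁ t₂ θ θ' : ℝ} in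
theorem tiltedOutput_convexComb_le (ht₁ : 0 ≤ t₁) (ht₂ : 0 ≤ t₂) (hθ : 0 < θ) (hθ' : 0 < θ')
    (hθθ' : θ + θ' = 1) (y : Y) :
    tiltedOutput W P (θ * t₁ + θ' * t₂) y ≤
      tiltedOutput W P t₁ y ^ θ * tiltedOutput W P t₂ y ^ θ' := by
  have h : 1 + (θ * t₁ + θ' * t₂) = θ * (1 + t₁) + θ' * (1 + t₂) := by
    linear_combination hθθ'.symm
  simp only [tiltedOutput, h]
  exact ENNReal.sum_mul_rpow_add_le _ _ _ (by linarith) (by linarith) hθ hθ' hθθ'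

end

variable {X Y : Type*} [Fintype X] [Fintype Y] {W : X → Y → ℝ≥0∞} {P : X → ℝ≥0∞} {t : ℝ}

theorem IsChannel.isDist (hW : IsChannel W) (x : X) : IsDist (W x) := hW x

theorem margX_joint (hW : IsChannel W) : margX (joint P W) = P := by
  funext x
  simp only [margX, joint, ← Finset.mul_sum, hW x, mul_one]

variable (W P t) in
def sibsonNorm : ℝ≥0∞ := ∑ y, tiltedOutput W P t y ^ (1 + t)⁻¹

variable (W P t) in
/-- Sibson's closed form of `t · I_{1+t}(X:Y)` for `P_{XY} = P · W` (see `renyiMI_joint_eq`). -/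
def scaledMI : ℝ := (1 + t) * Real.logb 2 (sibsonNorm W P t).toReal

theorem tiltedOutput_le_one (hW : IsChannel W) (hP : IsDist P) (ht : 0 ≤ t) (y : Y) :
    tiltedOutput W P t y ≤ 1 :=
  calc tiltedOutput W P t y ≤ ∑ x, P x * 1 :=
        Finset.sum_le_sum fun x _ => by
          gcongr
          exact ENNReal.rpow_le_one ((hW.isDist x).le_one y) (by linarith)
    _ = 1 := by simpa [IsDist] using hP

theorem tiltedOutput_ne_top (hW : IsChannel W) (hP : IsDist P) (ht : 0 ≤ t) (y : Y) :
    tiltedOutput W P t y ≠ ⊤ :=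
  ne_top_of_le_ne_top ENNReal.one_ne_top (tiltedOutput_le_one hW hP ht y)

theorem sibsonNorm_pos (hW : IsChannel W) (hP : IsDist P) (ht : 0 ≤ t) :
    0 < sibsonNorm W P t := by
  obtain ⟨x, hx⟩ := hP.exists_ne_zero
  obtain ⟨y, hy⟩ := (hW.isDist x).exists_ne_zero
  have hA : tiltedOutput W P t y ≠ 0 := by
    simp only [tiltedOutput, Ne, Finset.sum_eq_zero_iff, Finset.mem_univ, true_implies,
      not_forall]
    exact ⟨x, mul_ne_zero hx (by simp [hy, (hW.isDist x).ne_top y])⟩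
  calc 0 < tiltedOutput W P t y ^ (1 + t)⁻¹ :=
        ENNReal.rpow_pos (pos_of_ne_zero hA) (tiltedOutput_ne_top hW hP ht y)
    _ ≤ sibsonNorm W P t :=
        Finset.single_le_sum (f := fun y => tiltedOutput W P t y ^ (1 + t)⁻¹)
          (fun _ _ => zero_le) (Finset.mem_univ y)

theorem sibsonNorm_le_card (hW : IsChannel W) (hP : IsDist P) (ht : 0 ≤ t) :
    sibsonNorm W P t ≤ Fintype.card Y :=
  calc sibsonNorm W P t ≤ ∑ _y : Y, 1 :=
        Finset.sum_le_sum fun y _ =>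
          ENNReal.rpow_le_one (tiltedOutput_le_one hW hP ht y) (by positivity)
    _ = Fintype.card Y := by simp

theorem sibsonNorm_ne_top (hW : IsChannel W) (hP : IsDist P) (ht : 0 ≤ t) :
    sibsonNorm W P t ≠ ⊤ :=
  ne_top_of_le_ne_top (ENNReal.natCast_ne_top _) (sibsonNorm_le_card hW hP ht)

theorem sibsonNorm_toReal_pos (hW : IsChannel W) (hP : IsDist P) (ht : 0 ≤ t) :
    0 < (sibsonNorm W P t).toReal :=
  ENNReal.toReal_pos (sibsonNorm_pos hW hP ht).ne' (sibsonNorm_ne_top hW hP ht)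

theorem scaledMI_zero (hW : IsChannel W) (hP : IsDist P) : scaledMI W P 0 = 0 := by
  have hN : sibsonNorm W P 0 = 1 := by
    simp only [sibsonNorm, tiltedOutput, add_zero, inv_one, ENNReal.rpow_one]
    rw [Finset.sum_comm]
    simpa [← Finset.mul_sum, hW _, IsDist] using hP
  simp [scaledMI, hN]

theorem scaledMI_le (hW : IsChannel W) (hP : IsDist P) (ht : 0 ≤ t) :
    scaledMI W P t ≤ (1 + t) * Real.logb 2 (Fintype.card Y) := by
  refine mul_le_mul_of_nonneg_left ?_ (by linarith)
  refine Real.logb_le_logb_of_le one_lt_two (sibsonNorm_toReal_pos hW hP ht) ?_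
  simpa using ENNReal.toReal_mono (ENNReal.natCast_ne_top _) (sibsonNorm_le_card hW hP ht)

theorem sum_joint_rpow_mul_rpow_neg (hP : IsDist P) (ht : 0 < t)
    {Q : Y → ℝ≥0∞} (hQ : ∀ y, Q y ≠ ⊤) :
    ∑ p : X × Y, joint P W p ^ (1 + t) * (P p.1 * Q p.2) ^ (-t) =
      ∑ y, tiltedOutput W P t y * Q y ^ (-t) := by
  have hterm : ∀ x y, joint P W (x, y) ^ (1 + t) * (P x * Q y) ^ (-t) =
      P x * W x y ^ (1 + t) * Q y ^ (-t) := by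
    intro x y
    by_cases hx : P x = 0
    · simp [joint, hx, ENNReal.zero_rpow_of_pos (show 0 < 1 + t by linarith)]
    rw [joint, ENNReal.mul_rpow_of_nonneg _ _ (by linarith),
      ENNReal.mul_rpow_of_ne_top (hP.ne_top x) (hQ y)]
    calc P x ^ (1 + t) * W x y ^ (1 + t) * (P x ^ (-t) * Q y ^ (-t))
        = P x ^ (1 + t + -t) * W x y ^ (1 + t) * Q y ^ (-t) := by
          rw [ENNReal.rpow_add (1 + t) (-t) hx (hP.ne_top x)]; ring
      _ = P x * W x y ^ (1 + t) * Q y ^ (-t) := by simp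
  simp only [Fintype.sum_prod_type, hterm, tiltedOutput, Finset.sum_mul]
  exact Finset.sum_comm

theorem renyiD_joint_prod (hW : IsChannel W) (hP : IsDist P) (ht : 0 < t)
    {Q : Y → ℝ≥0∞} (hQ : IsDist Q) :
    renyiD (ENNReal.ofReal (1 + t)) (joint P W) (fun p => margX (joint P W) p.1 * Q p.2) =
      ((t⁻¹ : ℝ) : EReal) * elog2 (∑ y, tiltedOutput W P t y * Q y ^ (-t)) := by
  rw [margX_joint hW, renyiD_ofReal_one_add _ _ ht,
    sum_joint_rpow_mul_rpow_neg hP ht hQ.ne_top]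

/-- Sibson's identity: the optimal `Q_Y` is proportional to `(tiltedOutput W P t ·)^{1/(1+t)}`. -/
theorem renyiMI_joint_eq (hW : IsChannel W) (hP : IsDist P) (ht : 0 < t) :
    renyiMI (ENNReal.ofReal (1 + t)) (joint P W) = ((t⁻¹ * scaledMI W P t : ℝ) : EReal) := by
  have hN0 := (sibsonNorm_pos hW hP ht.le).ne'
  have hNtop := sibsonNorm_ne_top hW hP ht.le
  have hval : ((t⁻¹ * scaledMI W P t : ℝ) : EReal) =
      ((t⁻¹ : ℝ) : EReal) * elog2 (sibsonNorm W P t ^ (1 + t)) := by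
    rw [elog2_of_ne (by simp [hN0, hNtop]) (ENNReal.rpow_ne_top_of_nonneg (by linarith) hNtop),
      ← ENNReal.toReal_rpow,
      Real.logb_rpow_eq_mul_logb_of_pos (sibsonNorm_toReal_pos hW hP ht.le), scaledMI,
      EReal.coe_mul]
  set Qopt : Y → ℝ≥0∞ := fun y => tiltedOutput W P t y ^ (1 + t)⁻¹ / sibsonNorm W P t
  have hQopt : IsDist Qopt := by
    simp only [IsDist, Qopt, div_eq_mul_inv, ← Finset.sum_mul]
    exact ENNReal.mul_inv_cancel hN0 hNtop
  rw [renyiMI, hval]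
  refine le_antisymm (iInf_le_of_le ⟨Qopt, hQopt⟩ (le_of_eq ?_)) (le_iInf fun Q => ?_)
  · rw [renyiD_joint_prod hW hP ht hQopt]
    congr 2
    exact ENNReal.sum_mul_rpow_neg_of_proportional (tiltedOutput_ne_top hW hP ht.le) ht
      hN0 hNtop
  · rw [renyiD_joint_prod hW hP ht Q.2]
    exact mul_le_mul_of_nonneg_left
      (elog2_mono (ENNReal.rpow_sum_rpow_inv_le_sum_mul_rpow_neg Q.2 ht))
      (EReal.coe_nonneg.2 (inv_nonneg.2 ht.le))

section Convexity

variable {t₁ t₂ θ θ' : ℝ}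

theorem sibsonNorm_convexComb_le (ht₁ : 0 ≤ t₁) (ht₂ : 0 ≤ t₂) (hθ : 0 < θ) (hθ' : 0 < θ')
    (hθθ' : θ + θ' = 1) :
    sibsonNorm W P (θ * t₁ + θ' * t₂) ≤
      sibsonNorm W P t₁ ^ (θ * (1 + t₁) / (1 + (θ * t₁ + θ' * t₂))) *
        sibsonNorm W P t₂ ^ (θ' * (1 + t₂) / (1 + (θ * t₁ + θ' * t₂))) := by
  set t := θ * t₁ + θ' * t₂
  have ht : 0 < 1 + t := by positivity
  have hpow : ∀ (A : ℝ≥0∞) {s : ℝ} (c : ℝ), 0 < 1 + s →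
      (A ^ (1 + s)⁻¹) ^ (c * (1 + s) / (1 + t)) = A ^ (c * (1 + t)⁻¹) := by
    intro A s c hs
    rw [← ENNReal.rpow_mul]
    congr 1
    field_simp
  have hterm : ∀ y, tiltedOutput W P t y ^ (1 + t)⁻¹ ≤
      (tiltedOutput W P t₁ y ^ (1 + t₁)⁻¹) ^ (θ * (1 + t₁) / (1 + t)) *
        (tiltedOutput W P t₂ y ^ (1 + t₂)⁻¹) ^ (θ' * (1 + t₂) / (1 + t)) := by
    intro y
    rw [hpow _ θ (by linarith), hpow _ θ' (by linarith), ENNReal.rpow_mul, ENNReal.rpow_mul,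
      ← ENNReal.mul_rpow_of_nonneg _ _ (by positivity)]
    exact ENNReal.rpow_le_rpow (tiltedOutput_convexComb_le ht₁ ht₂ hθ hθ' hθθ' y)
      (by positivity)
  calc sibsonNorm W P t
      ≤ ∑ y, (tiltedOutput W P t₁ y ^ (1 + t₁)⁻¹) ^ (θ * (1 + t₁) / (1 + t)) *
          (tiltedOutput W P t₂ y ^ (1 + t₂)⁻¹) ^ (θ' * (1 + t₂) / (1 + t)) :=
        Finset.sum_le_sum fun y _ => hterm y
    _ ≤ _ := ENNReal.sum_rpow_mul_rpow_le _ _ _ (by positivity) (by positivity)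
        (by field_simp; linear_combination hθθ')

theorem scaledMI_convexOn (hW : IsChannel W) (hP : IsDist P) :
    ConvexOn ℝ (Ici 0) (scaledMI W P) := by
  refine ⟨convex_Ici 0, fun t₁ ht₁ t₂ ht₂ θ θ' hθ hθ' hθθ' => ?_⟩
  rw [mem_Ici] at ht₁ ht₂
  rcases hθ.eq_or_lt with rfl | hθ
  · obtain rfl : θ' = 1 := by linarith
    simp
  rcases hθ'.eq_or_lt with rfl | hθ'
  · obtain rfl : θ = 1 := by linarith
    simp
  set t := θ * t₁ + θ' * t₂
  set a := θ * (1 + t₁) / (1 + t)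
  set b := θ' * (1 + t₂) / (1 + t)
  have ht : 0 < 1 + t := by positivity
  have hpos : ∀ {s}, 0 ≤ s → 0 < (sibsonNorm W P s).toReal := sibsonNorm_toReal_pos hW hP
  have hN : (sibsonNorm W P t).toReal ≤
      (sibsonNorm W P t₁).toReal ^ a * (sibsonNorm W P t₂).toReal ^ b := by
    rw [ENNReal.toReal_rpow, ENNReal.toReal_rpow, ← ENNReal.toReal_mul]
    refine ENNReal.toReal_mono ?_ (sibsonNorm_convexComb_le ht₁ ht₂ hθ hθ' hθθ')
    exact ENNReal.mul_ne_top
      (ENNReal.rpow_ne_top_of_nonneg (by positivity) (sibsonNorm_ne_top hW hP ht₁))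
      (ENNReal.rpow_ne_top_of_nonneg (by positivity) (sibsonNorm_ne_top hW hP ht₂))
  have hlog : Real.logb 2 (sibsonNorm W P t).toReal ≤
      a * Real.logb 2 (sibsonNorm W P t₁).toReal + b * Real.logb 2 (sibsonNorm W P t₂).toReal := by
    refine (Real.logb_le_logb_of_le one_lt_two (hpos (by positivity)) hN).trans_eq ?_
    rw [Real.logb_mul (by positivity [hpos ht₁]) (by positivity [hpos ht₂]),
      Real.logb_rpow_eq_mul_logb_of_pos (hpos ht₁), Real.logb_rpow_eq_mul_logb_of_pos (hpos ht₂)]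
  calc scaledMI W P t
      ≤ (1 + t) * (a * Real.logb 2 (sibsonNorm W P t₁).toReal +
          b * Real.logb 2 (sibsonNorm W P t₂).toReal) :=
        mul_le_mul_of_nonneg_left hlog ht.le
    _ = θ • scaledMI W P t₁ + θ' • scaledMI W P t₂ := by
        simp only [scaledMI, smul_eq_mul, a, b]
        field_simp

end Convexity

variable (W) in
def scaledCap (t : ℝ) : ℝ := ⨆ P : {P : X → ℝ≥0∞ // IsDist P}, scaledMI W P.1 t

theorem bddAbove_scaledMI (hW : IsChannel W) (ht : 0 ≤ t) :
    BddAbove (range fun P : {P : X → ℝ≥0∞ // IsDist P} => scaledMI W P.1 t) :=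
  ⟨_, forall_mem_range.2 fun P => scaledMI_le hW P.2 ht⟩

variable [Nonempty X]

instance : Nonempty {P : X → ℝ≥0∞ // IsDist P} := ⟨⟨_, isDist_uniform⟩⟩

theorem scaledCap_convexOn (hW : IsChannel W) : ConvexOn ℝ (Ici 0) (scaledCap W) :=
  ConvexOn.ciSup (convex_Ici 0) (fun P => scaledMI_convexOn hW P.2)
    fun _ ht => bddAbove_scaledMI hW ht

theorem renyiCap_eq (hW : IsChannel W) (ht : 0 < t) :
    renyiCap (ENNReal.ofReal (1 + t)) W = ((t⁻¹ * scaledCap W t : ℝ) : EReal) := by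
  have hmono : Monotone fun x : ℝ => ((t⁻¹ * x : ℝ) : EReal) := fun x y hxy =>
    EReal.coe_le_coe_iff.2 (mul_le_mul_of_nonneg_left hxy (inv_nonneg.2 ht.le))
  have hcont : Continuous fun x : ℝ => ((t⁻¹ * x : ℝ) : EReal) :=
    continuous_coe_real_ereal.comp (continuous_const.mul continuous_id)
  rw [renyiCap, scaledCap, hmono.map_ciSup_of_continuousAt hcont.continuousAt
    (bddAbove_scaledMI hW ht.le)]
  exact iSup_congr fun P => renyiMI_joint_eq hW P.2 ht

theorem mul_toReal_renyiCap (hW : IsChannel W) (ht : 0 ≤ t) :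
    t * (renyiCap (ENNReal.ofReal (1 + t)) W).toReal = scaledCap W t := by
  rcases ht.eq_or_lt with rfl | ht
  · rw [zero_mul, scaledCap, iSup_congr fun P => scaledMI_zero hW P.2, ciSup_const]
  rw [renyiCap_eq hW ht, EReal.toReal_coe, ← mul_assoc, mul_inv_cancel₀ ht.ne', one_mul]

theorem coe_mul_sub_renyiCap (hW : IsChannel W) (r : ℝ) (ht : 0 ≤ t) :
    (t : EReal) * (r - renyiCap (ENNReal.ofReal (1 + t)) W) =
      ((t * r - t * (renyiCap (ENNReal.ofReal (1 + t)) W).toReal : ℝ) : EReal) := by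
  rcases ht.eq_or_lt with rfl | ht
  · simp
  rw [renyiCap_eq hW ht, EReal.toReal_coe, ← EReal.coe_sub, ← EReal.coe_mul, mul_sub]

end RST

namespace RST

theorem renyi_maximization_general
    {X Y : Type*} [Fintype X] [Fintype Y] [Nonempty X]
    (W : X → Y → ℝ≥0∞) (hW : IsChannel W) (s : ℝ) (hs : 0 < s) (Rhat : ℝ)
    (hR : HasDerivWithinAt (fun t : ℝ => t * (renyiCap (ENNReal.ofReal (1 + t)) W).toReal)
      Rhat (Set.Ici s) s) :
    (∀ r : ℝ, Rhat ≤ r →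
      (⨆ t : {t : ℝ // 0 ≤ t},
          ((t.1 : ℝ) : EReal) * ((r : EReal) - renyiCap (ENNReal.ofReal (1 + t.1)) W)) =
        ⨆ t : {t : ℝ // s ≤ t},
          ((t.1 : ℝ) : EReal) * ((r : EReal) - renyiCap (ENNReal.ofReal (1 + t.1)) W)) ∧
    (∀ r : ℝ, 0 ≤ r → r < Rhat →
      (⨆ t : {t : ℝ // s ≤ t},
          ((t.1 : ℝ) : EReal) * ((r : EReal) - renyiCap (ENNReal.ofReal (1 + t.1)) W)) =
        ((s : ℝ) : EReal) * ((r : EReal) - renyiCap (ENNReal.ofReal (1 + s)) W)) ∧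
    ((⨆ t : {t : ℝ // 0 ≤ t},
        ((t.1 : ℝ) : EReal) * ((Rhat : EReal) - renyiCap (ENNReal.ofReal (1 + t.1)) W)) =
      ((s : ℝ) : EReal) * ((Rhat : EReal) - renyiCap (ENNReal.ofReal (1 + s)) W)) := by
  have hF : ConvexOn ℝ (Ici 0) fun t : ℝ => t * (renyiCap (ENNReal.ofReal (1 + t)) W).toReal :=
    (scaledCap_convexOn hW).congr fun t ht => (mul_toReal_renyiCap hW ht).symm
  have hsI : s ∈ interior (Ici (0 : ℝ)) := by rwa [interior_Ici]
  have hle : ∀ r t : ℝ, 0 ≤ t → (r - Rhat) * (t - s) ≤ 0 →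
      (t : EReal) * (r - renyiCap (ENNReal.ofReal (1 + t)) W) ≤
        (s : EReal) * (r - renyiCap (ENNReal.ofReal (1 + s)) W) := by
    intro r t ht h
    rw [coe_mul_sub_renyiCap hW r ht, coe_mul_sub_renyiCap hW r hs.le, EReal.coe_le_coe_iff]
    exact hF.mul_sub_le_of_hasDerivWithinAt_Ioi hsI ht hR.Ioi_of_Ici h
  refine ⟨fun r hr => le_antisymm ?_ ?_, fun r _ hr => le_antisymm ?_ ?_, le_antisymm ?_ ?_⟩
  · refine iSup_le fun t => ?_
    rcases le_total s t with hst | hts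
    · exact le_iSup_of_le ⟨t, hst⟩ le_rfl
    · refine (hle r t t.2 ?_).trans (le_iSup_of_le ⟨s, le_rfl⟩ le_rfl)
      exact mul_nonpos_of_nonneg_of_nonpos (sub_nonneg.2 hr) (sub_nonpos.2 hts)
  · exact iSup_le fun t => le_iSup_of_le ⟨t, hs.le.trans t.2⟩ le_rfl
  · refine iSup_le fun t => hle r t (hs.le.trans t.2) ?_
    exact mul_nonpos_of_nonpos_of_nonneg (sub_nonpos.2 hr.le) (sub_nonneg.2 t.2)
  · exact le_iSup_of_le ⟨s, le_rfl⟩ le_rfl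
  · exact iSup_le fun t => hle Rhat t t.2 (by simp)
  · exact le_iSup_of_le ⟨s, hs.le⟩ le_rfl

/-- **Lemma 22.**  Let `R̂(s)` be the right derivative at `t = s` of the convex
function `t ↦ t·I_{1+t}(W)`.  Then:
(i) if `r ≥ R̂(s)`, then `sup_{t ≥ 0} t(r - I_{1+t}(W)) = sup_{t ≥ s} t(r - I_{1+t}(W))`;
(ii) if `0 ≤ r < R̂(s)`, then `sup_{t ≥ s} t(r - I_{1+t}(W)) = s(r - I_{1+s}(W))`;
(iii) `sup_{t ≥ 0} t(R̂(s) - I_{1+t}(W)) = s(R̂(s) - I_{1+s}(W))`. -/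
theorem renyi_maximization
    {X Y : Type*} [Fintype X] [Fintype Y] [Nonempty X] [Nonempty Y]
    (W : X → Y → ℝ≥0∞) (hW : IsChannel W) (s : ℝ) (hs : 0 < s) (Rhat : ℝ)
    (hR : HasDerivWithinAt (fun t : ℝ => t * (renyiCap (ENNReal.ofReal (1 + t)) W).toReal)
      Rhat (Set.Ici s) s) :
    (∀ r : ℝ, Rhat ≤ r →
      (⨆ t : {t : ℝ // 0 ≤ t},
          ((t.1 : ℝ) : EReal) * ((r : EReal) - renyiCap (ENNReal.ofReal (1 + t.1)) W)) =
        ⨆ t : {t : ℝ // s ≤ t},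
          ((t.1 : ℝ) : EReal) * ((r : EReal) - renyiCap (ENNReal.ofReal (1 + t.1)) W)) ∧
    (∀ r : ℝ, 0 ≤ r → r < Rhat →
      (⨆ t : {t : ℝ // s ≤ t},
          ((t.1 : ℝ) : EReal) * ((r : EReal) - renyiCap (ENNReal.ofReal (1 + t.1)) W)) =
        ((s : ℝ) : EReal) * ((r : EReal) - renyiCap (ENNReal.ofReal (1 + s)) W)) ∧
    ((⨆ t : {t : ℝ // 0 ≤ t},
        ((t.1 : ℝ) : EReal) * ((Rhat : EReal) - renyiCap (ENNReal.ofReal (1 + t.1)) W)) =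
      ((s : ℝ) : EReal) * ((Rhat : EReal) - renyiCap (ENNReal.ofReal (1 + s)) W)) :=
  renyi_maximization_general W hW s hs Rhat hR

end RST
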